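/- Let A be a (not necessarily unital) C*-algebra. Then A possesses a quasi-identity (an element e ∈ A with a = e a + a e − e a e for all a ∈ A; no norm bound on e is assumed) if and only if A is unital, i.e., there exists u ∈ A with u a = a and a u = a for all a ∈ A. Moreover, in this case every quasi-identity of A equals the identity: any e ∈ A with a = e a + a e − e a e for all a ∈ A satisfies e a = a and a e = a for all a ∈ A. -/

import Mathlib

/-!
If `e` is a quasi-identity, then `(1 - e) a (1 - e) = 0` for every `a` (computed in the
unitization). For `y = (1 - e) c` this gives `y a y = ((1 - e) (c a) (1 - e)) c = 0`, in particular
`y y⋆ y = 0`, which forces `y = 0` by the C⋆-identity. Hence `e c = c`, and symmetrically `c e = c`.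
-/

def IsQuasiIdentity {A : Type*} [NonUnitalRing A] (e : A) : Prop :=
  ∀ a : A, a = e * a + a * e - e * a * e

namespace IsQuasiIdentity

variable {A : Type*} [NonUnitalRing A] {e : A}

lemma sub_mul_mul_sub_eq_zero (he : IsQuasiIdentity e) (a : A) :
    a - e * a - a * e + e * a * e = 0 := by
  nth_rw 1 [he a]
  abel

lemma sub_mul_left_mul_self_eq_zero (he : IsQuasiIdentity e) (c a : A) :
    (c - e * c) * a * (c - e * c) = 0 := by
  calc (c - e * c) * a * (c - e * c)
      = (c * a - e * (c * a) - c * a * e + e * (c * a) * e) * c := by noncomm_ring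
    _ = 0 := by rw [he.sub_mul_mul_sub_eq_zero, zero_mul]

lemma sub_mul_right_mul_self_eq_zero (he : IsQuasiIdentity e) (c a : A) :
    (c - c * e) * a * (c - c * e) = 0 := by
  calc (c - c * e) * a * (c - c * e)
      = c * (a * c - e * (a * c) - a * c * e + e * (a * c) * e) := by noncomm_ring
    _ = 0 := by rw [he.sub_mul_mul_sub_eq_zero, mul_zero]

end IsQuasiIdentity

lemma CStarRing.eq_zero_of_mul_star_mul_self_eq_zero {E : Type*} [NonUnitalNormedRing E]
    [StarRing E] [CStarRing E] {y : E} (h : y * star y * y = 0) : y = 0 := by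
  have hp : star (star y * y) * (star y * y) = 0 := by
    rw [star_mul, star_star, mul_assoc, ← mul_assoc y, h, mul_zero]
  rwa [star_mul_self_eq_zero_iff, star_mul_self_eq_zero_iff] at hp

lemma IsQuasiIdentity.mul_eq_self {A : Type*} [NonUnitalNormedRing A] [StarRing A] [CStarRing A]
    {e : A} (he : IsQuasiIdentity e) (c : A) : e * c = c ∧ c * e = c :=
  ⟨(sub_eq_zero.mp (CStarRing.eq_zero_of_mul_star_mul_self_eq_zero
      (he.sub_mul_left_mul_self_eq_zero c _))).symm,
    (sub_eq_zero.mp (CStarRing.eq_zero_of_mul_star_mul_self_eq_zero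
      (he.sub_mul_right_mul_self_eq_zero c _))).symm⟩

theorem stmt_7_general {A : Type*} [NonUnitalNormedRing A] [StarRing A] [CStarRing A] :
    ((∃ e : A, ∀ a : A, a = e * a + a * e - e * a * e) ↔
      (∃ u : A, ∀ a : A, u * a = a ∧ a * u = a)) ∧
    (∀ e : A, (∀ a : A, a = e * a + a * e - e * a * e) →
      ∀ a : A, e * a = a ∧ a * e = a) := by
  have quasi_identity_is_identity : ∀ e : A, IsQuasiIdentity e → ∀ a : A, e * a = a ∧ a * e = a :=
    fun e he => he.mul_eq_self
  refine ⟨⟨fun ⟨e, he⟩ => ⟨e, quasi_identity_is_identity e he⟩, fun ⟨u, hu⟩ => ⟨u, fun a => ?_⟩⟩,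
    quasi_identity_is_identity⟩
  rw [(hu a).1, (hu a).2, add_sub_cancel_right]

/-- A (not necessarily unital) C*-algebra has a quasi-identity iff it is unital;
moreover every quasi-identity is then a two-sided identity. -/
theorem stmt_7 {A : Type*} [NonUnitalNormedRing A] [StarRing A] [CStarRing A]
    [CompleteSpace A] [NormedSpace ℂ A] [IsScalarTower ℂ A A] [SMulCommClass ℂ A A]
    [StarModule ℂ A] :
    ((∃ e : A, ∀ a : A, a = e * a + a * e - e * a * e) ↔
      (∃ u : A, ∀ a : A, u * a = a ∧ a * u = a)) ∧
    (∀ e : A, (∀ a : A, a = e * a + a * e - e * a * e) →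
      ∀ a : A, e * a = a ∧ a * e = a) :=
  stmt_7_general
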